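/- The set of points (x, y) in the positive integer lattice such that the word 1^y 0^{x-y} is Ulam (with 1 ≤ y ≤ x) equals {(1,1)} ∪ S, where S is the discrete Sierpiński triangle defined by S_0 = {(2,1)}, S_{n+1} = S_n ∪ (S_n + (2^n, 0)) ∪ (S_n + (2^n, 2^n)), and S = ∪_n S_n. -/

import Mathlib

/-- Ulam words with fuel bounding the recursion depth (fuel ≥ length suffices). -/
def UlamN : ℕ → List Bool → Prop
  | 0, _ => False
  | n + 1, w =>
    w = [false] ∨ w = [true] ∨
      ∃! p : List Bool × List Bool,
        p.1 ≠ [] ∧ p.2 ≠ [] ∧ UlamN n p.1 ∧ UlamN n p.2 ∧ p.1 ≠ p.2 ∧ p.1 ++ p.2 = w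

/-- A word over {0,1} (`false` = 0, `true` = 1) is Ulam. -/
def IsUlam (w : List Bool) : Prop := UlamN w.length w

/-- The integer whose binary representation (most significant digit first) is `w`. -/
def binVal (w : List Bool) : ℕ := w.foldl (fun acc b => 2 * acc + b.toNat) 0


/-- The finite stages of the discrete Sierpiński triangle. -/
def SierpinskiStage : ℕ → Set (ℕ × ℕ)
  | 0 => {(2, 1)}
  | n + 1 =>
      SierpinskiStage n ∪ ((fun p => p + ((2 ^ n : ℕ), (0 : ℕ))) '' SierpinskiStage n) ∪
        ((fun p => p + ((2 ^ n : ℕ), (2 ^ n : ℕ))) '' SierpinskiStage n)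

/-!
A factor of `1^a 0^b` is either unary or again of this shape, and a unary word is Ulam only if it
has length one. So the only candidate factorisations of `1^(a+1) 0^(b+1)` into Ulam words are
`1 · 1^a 0^(b+1)` and `1^(a+1) 0^b · 0`, and Ulam-ness of these words obeys Pascal's rule mod 2:
`1^(a+1) 0^(b+1)` is Ulam iff `(a+b).choose a` is odd. The odd entries of Pascal's triangle form
the Sierpiński triangle, since `(X+1)^(2^n+m) = (X^(2^n)+1)(X+1)^m` over `ZMod 2`.
-/

open List

lemma not_ulamN_nil (n : ℕ) : ¬ UlamN n [] := by
  cases n <;> simp +contextual [UlamN, ExistsUnique]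

lemma ulamN_succ_iff {n : ℕ} {w : List Bool} (hw : w.length ≤ n) :
    UlamN (n + 1) w ↔ UlamN n w := by
  induction n generalizing w with
  | zero => simp [length_eq_zero_iff.1 (Nat.le_zero.1 hw), not_ulamN_nil]
  | succ n ih =>
    have parts : ∀ u v : List Bool, u ≠ [] → v ≠ [] → u ++ v = w →
        (UlamN (n + 1) u ↔ UlamN n u) ∧ (UlamN (n + 1) v ↔ UlamN n v) := by
      rintro u v hu hv rfl
      rw [length_append] at hw
      have := length_pos_iff.2 hu
      have := length_pos_iff.2 hv
      exact ⟨ih (by omega), ih (by omega)⟩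
    refine or_congr_right (or_congr_right (existsUnique_congr fun ⟨u, v⟩ => ?_))
    constructor <;> rintro ⟨hu, hv, hU, hV, hne, huv⟩
    · exact ⟨hu, hv, (parts u v hu hv huv).1.1 hU, (parts u v hu hv huv).2.1 hV, hne, huv⟩
    · exact ⟨hu, hv, (parts u v hu hv huv).1.2 hU, (parts u v hu hv huv).2.2 hV, hne, huv⟩

lemma ulamN_iff_isUlam {n : ℕ} {w : List Bool} (hw : w.length ≤ n) :
    UlamN n w ↔ IsUlam w := by
  induction n, hw using Nat.le_induction with
  | base => rfl
  | succ n hn ih => exact (ulamN_succ_iff hn).trans ih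

lemma IsUlam.ne_nil {w : List Bool} (hw : IsUlam w) : w ≠ [] := by
  rintro rfl
  exact not_ulamN_nil 0 hw

lemma isUlam_singleton (b : Bool) : IsUlam [b] := by
  cases b <;> simp [IsUlam, UlamN]

lemma isUlam_iff_existsUnique {w : List Bool} (hw : 2 ≤ w.length) :
    IsUlam w ↔ ∃! p : List Bool × List Bool,
      IsUlam p.1 ∧ IsUlam p.2 ∧ p.1 ≠ p.2 ∧ p.1 ++ p.2 = w := by
  obtain ⟨n, hn⟩ : ∃ n, w.length = n + 1 := ⟨w.length - 1, by omega⟩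
  have not_singleton : ∀ b, w ≠ [b] := by
    rintro b rfl
    simp at hw
  rw [IsUlam, hn, UlamN, or_iff_right (not_singleton false), or_iff_right (not_singleton true)]
  refine existsUnique_congr fun ⟨u, v⟩ => ?_
  constructor
  · rintro ⟨hu, hv, hU, hV, hne, rfl⟩
    rw [length_append] at hn
    have := length_pos_iff.2 hu
    have := length_pos_iff.2 hv
    exact ⟨(ulamN_iff_isUlam (by omega)).1 hU, (ulamN_iff_isUlam (by omega)).1 hV, hne, rfl⟩
  · rintro ⟨hU, hV, hne, rfl⟩
    rw [length_append] at hn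
    have := length_pos_iff.2 hU.ne_nil
    have := length_pos_iff.2 hV.ne_nil
    exact ⟨hU.ne_nil, hV.ne_nil, (ulamN_iff_isUlam (by omega)).2 hU,
      (ulamN_iff_isUlam (by omega)).2 hV, hne, rfl⟩

lemma isUlam_replicate_iff (c : Bool) (k : ℕ) : IsUlam (replicate k c) ↔ k = 1 := by
  induction k using Nat.strong_induction_on with
  | _ k ih =>
    refine ⟨fun hk => ?_, by rintro rfl; exact isUlam_singleton c⟩
    by_contra hk1
    obtain rfl | hk2 : k = 0 ∨ 2 ≤ k := by omega
    · exact hk.ne_nil rfl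
    obtain ⟨⟨u, v⟩, ⟨hu, hv, hne, huv⟩, -⟩ := (isUlam_iff_existsUnique (by simpa)).1 hk
    dsimp only at hu hv hne huv
    obtain ⟨hlen, hu_eq, hv_eq⟩ := append_eq_replicate_iff.1 huv
    have hu1 : u.length = 1 := by
      rw [hu_eq] at hu
      have := length_pos_iff.2 hv.ne_nil
      exact (ih _ (by omega)).1 hu
    have hv1 : v.length = 1 := by
      rw [hv_eq] at hv
      have := length_pos_iff.2 hu.ne_nil
      exact (ih _ (by omega)).1 hv
    exact hne (by rw [hu_eq, hv_eq, hu1, hv1])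

lemma eq_of_append_eq_replicate_append_replicate {a b : ℕ} {u v : List Bool}
    (huv : u ++ v = replicate (a + 1) true ++ replicate (b + 1) false)
    (hu : IsUlam u) (hv : IsUlam v) :
    (u = [true] ∧ v = replicate a true ++ replicate (b + 1) false) ∨
      (u = replicate (a + 1) true ++ replicate b false ∧ v = [false]) := by
  rcases append_eq_append_iff.1 huv with ⟨s, hs, rfl⟩ | ⟨s, rfl, hs⟩
  · obtain ⟨hlen, hu_eq, hs_eq⟩ := append_eq_replicate_iff.1 hs.symm
    rw [hu_eq] at hu
    rw [(isUlam_replicate_iff true _).1 hu] at hu_eq hlen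
    exact Or.inl ⟨hu_eq, by rw [hs_eq, show s.length = a by omega]⟩
  · obtain ⟨hlen, hs_eq, hv_eq⟩ := append_eq_replicate_iff.1 hs.symm
    rw [hv_eq] at hv
    rw [(isUlam_replicate_iff false _).1 hv] at hv_eq hlen
    exact Or.inr ⟨by rw [hs_eq, show s.length = b by omega], hv_eq⟩

lemma existsUnique_eq_and_or_eq_and_iff_xor {α : Type*} {x y : α} {p q : Prop} (hxy : x ≠ y) :
    (∃! z, (z = x ∧ p) ∨ (z = y ∧ q)) ↔ Xor p q := by
  constructor
  · rintro ⟨z, ⟨rfl, hp⟩ | ⟨rfl, hq⟩, huniq⟩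
    · exact Or.inl ⟨hp, fun hq => hxy (huniq y (Or.inr ⟨rfl, hq⟩)).symm⟩
    · exact Or.inr ⟨hq, fun hp => hxy (huniq x (Or.inl ⟨rfl, hp⟩))⟩
  · rintro (⟨hp, hq⟩ | ⟨hq, hp⟩)
    · exact ⟨x, Or.inl ⟨rfl, hp⟩, fun z hz => hz.resolve_right (fun h => hq h.2) |>.1⟩
    · exact ⟨y, Or.inr ⟨rfl, hq⟩, fun z hz => hz.resolve_left (fun h => hp h.2) |>.1⟩

-- The two candidate factorisations coincide for this word, so the Pascal recursion starts here.
lemma isUlam_true_false : IsUlam [true, false] := by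
  rw [isUlam_iff_existsUnique (by simp)]
  refine ⟨([true], [false]), ⟨isUlam_singleton _, isUlam_singleton _, by simp, rfl⟩, ?_⟩
  rintro ⟨u, v⟩ ⟨hu, hv, -, huv⟩
  rcases eq_of_append_eq_replicate_append_replicate (a := 0) (b := 0) huv hu hv with
    ⟨rfl, rfl⟩ | ⟨rfl, rfl⟩ <;> rfl

lemma isUlam_replicate_append_replicate_iff_xor {a b : ℕ} (hab : 1 ≤ a + b) :
    IsUlam (replicate (a + 1) true ++ replicate (b + 1) false) ↔
      Xor (IsUlam (replicate a true ++ replicate (b + 1) false))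
        (IsUlam (replicate (a + 1) true ++ replicate b false)) := by
  have hfirst : [true] ++ (replicate a true ++ replicate (b + 1) false) =
      replicate (a + 1) true ++ replicate (b + 1) false := by
    rw [replicate_succ]; rfl
  have hlast : (replicate (a + 1) true ++ replicate b false) ++ [false] =
      replicate (a + 1) true ++ replicate (b + 1) false := by
    rw [replicate_succ' (n := b), append_assoc]
  have hne : ∀ (c : Bool) (w : List Bool), a + b + 1 = w.length → [c] ≠ w := by
    rintro c w hw rfl
    rw [length_singleton] at hw
    omega
  have hlen : ∀ i j, (replicate i true ++ replicate j false).length = i + j := by simp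
  rw [isUlam_iff_existsUnique (by rw [hlen]; omega),
    ← existsUnique_eq_and_or_eq_and_iff_xor
      (x := ([true], replicate a true ++ replicate (b + 1) false))
      (y := (replicate (a + 1) true ++ replicate b false, [false]))
      fun h => hne true _ (by rw [hlen]; omega) (congrArg Prod.fst h)]
  refine existsUnique_congr fun ⟨u, v⟩ => ⟨fun ⟨hu, hv, _, huv⟩ => ?_, ?_⟩
  · rcases eq_of_append_eq_replicate_append_replicate huv hu hv with
      ⟨rfl, rfl⟩ | ⟨rfl, rfl⟩
    · exact Or.inl ⟨rfl, hv⟩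
    · exact Or.inr ⟨rfl, hu⟩
  · rintro (⟨h, hv⟩ | ⟨h, hu⟩) <;> obtain ⟨rfl, rfl⟩ := Prod.mk.inj h
    · exact ⟨isUlam_singleton true, hv, hne true _ (by rw [hlen]; omega), hfirst⟩
    · exact ⟨hu, isUlam_singleton false, (hne false _ (by rw [hlen]; omega)).symm, hlast⟩

lemma Nat.odd_add_iff_xor {m n : ℕ} : Odd (m + n) ↔ Xor (Odd m) (Odd n) := by
  rw [Nat.odd_add, xor_iff_iff_not, Nat.not_odd_iff_even]

theorem isUlam_replicate_append_replicate_iff_odd_choose (a b : ℕ) :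
    IsUlam (replicate (a + 1) true ++ replicate (b + 1) false) ↔ Odd ((a + b).choose a) := by
  induction a generalizing b with
  | zero =>
    simp only [zero_add, Nat.choose_zero_right, odd_one, iff_true]
    induction b with
    | zero => exact isUlam_true_false
    | succ b ih =>
      rw [isUlam_replicate_append_replicate_iff_xor (by omega)]
      simpa [isUlam_replicate_iff] using ih
  | succ a iha =>
    induction b with
    | zero =>
      rw [isUlam_replicate_append_replicate_iff_xor (by omega), iha 0]
      simp [isUlam_replicate_iff]
    | succ b ihb =>
      rw [isUlam_replicate_append_replicate_iff_xor (by omega), iha (b + 1), ihb,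
        show a + 1 + (b + 1) = a + (b + 1) + 1 by omega, Nat.choose_succ_succ, Nat.odd_add_iff_xor,
        show a + (b + 1) = a + 1 + b by omega]

open Polynomial in
theorem Nat.choose_prime_pow_add_modEq {p : ℕ} [Fact p.Prime] (n m k : ℕ) :
    (p ^ n + m).choose k ≡
      m.choose k + if p ^ n ≤ k then m.choose (k - p ^ n) else 0 [MOD p] := by
  rw [← ZMod.natCast_eq_natCast_iff]
  have frobenius : (X + 1 : (ZMod p)[X]) ^ (p ^ n + m) = X ^ p ^ n * (X + 1) ^ m + (X + 1) ^ m := by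
    rw [pow_add, add_pow_char_pow, one_pow]
    ring
  have := congrArg (coeff · k) frobenius
  simp only [coeff_X_add_one_pow, coeff_add, coeff_X_pow_mul'] at this
  rw [this]
  split_ifs <;> push_cast <;> ring

lemma Nat.odd_choose_two_pow_add_iff {n m k : ℕ} (hm : m < 2 ^ n) :
    Odd ((2 ^ n + m).choose k) ↔
      Odd (m.choose k) ∨ 2 ^ n ≤ k ∧ Odd (m.choose (k - 2 ^ n)) := by
  rw [Nat.odd_iff, Nat.choose_prime_pow_add_modEq n m k, Nat.odd_iff, Nat.odd_iff]
  split_ifs with hk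
  · simp [Nat.choose_eq_zero_of_lt (hm.trans_le hk), hk]
  · simp [hk]

def oddPascalRows (N : ℕ) : Set (ℕ × ℕ) := {q | q.1 < N ∧ Odd (q.1.choose q.2)}

lemma oddPascalRows_one : oddPascalRows 1 = {(0, 0)} := by
  ext ⟨m, k⟩
  simp only [oddPascalRows, Nat.lt_one_iff, Set.mem_ofPred_eq, Set.mem_singleton_iff, Prod.mk.injEq]
  constructor
  · rintro ⟨rfl, hodd⟩
    cases k <;> simp_all
  · rintro ⟨rfl, rfl⟩
    simp

lemma oddPascalRows_two_pow_succ (n : ℕ) :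
    oddPascalRows (2 ^ (n + 1)) =
      oddPascalRows (2 ^ n) ∪ (· + (2 ^ n, 0)) '' oddPascalRows (2 ^ n) ∪
        (· + (2 ^ n, 2 ^ n)) '' oddPascalRows (2 ^ n) := by
  ext ⟨m, k⟩
  simp only [oddPascalRows, Set.mem_union, Set.mem_image, Set.mem_ofPred_eq, Prod.exists,
    Prod.mk_add_mk, Prod.mk.injEq, pow_succ]
  constructor
  · rintro ⟨hm, hodd⟩
    by_cases hlt : m < 2 ^ n
    · exact Or.inl (Or.inl ⟨hlt, hodd⟩)
    obtain ⟨m, rfl⟩ := Nat.exists_eq_add_of_le (not_lt.1 hlt)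
    rcases (Nat.odd_choose_two_pow_add_iff (by omega)).1 hodd with h | ⟨hk, h⟩
    · exact Or.inl (Or.inr ⟨m, k, ⟨by omega, h⟩, add_comm .., rfl⟩)
    · exact Or.inr ⟨m, k - 2 ^ n, ⟨by omega, h⟩, add_comm .., by omega⟩
  · rintro ((h | ⟨m, k, ⟨hm, h⟩, rfl, rfl⟩) | ⟨m, k, ⟨hm, h⟩, rfl, rfl⟩)
    · exact ⟨by omega, h.2⟩
    · rw [add_comm m, Nat.odd_choose_two_pow_add_iff hm]
      exact ⟨by omega, Or.inl h⟩
    · rw [add_comm m, Nat.odd_choose_two_pow_add_iff hm, Nat.add_sub_cancel]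
      exact ⟨by omega, Or.inr ⟨by omega, h⟩⟩

lemma sierpinskiStage_eq_image (n : ℕ) :
    SierpinskiStage n = (· + (2, 1)) '' oddPascalRows (2 ^ n) := by
  induction n with
  | zero => simp [SierpinskiStage, oddPascalRows_one]
  | succ n ih =>
    have translate_comm : ∀ (c : ℕ × ℕ) (s : Set (ℕ × ℕ)),
        (· + c) '' ((· + (2, 1)) '' s) = (· + (2, 1)) '' ((· + c) '' s) := by
      intro c s
      simp only [Set.image_image, add_right_comm _ c]
    rw [SierpinskiStage, ih, translate_comm, translate_comm, oddPascalRows_two_pow_succ,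
      Set.image_union, Set.image_union]

lemma iUnion_sierpinskiStage :
    ⋃ n, SierpinskiStage n = (· + (2, 1)) '' {q : ℕ × ℕ | Odd (q.1.choose q.2)} := by
  simp_rw [sierpinskiStage_eq_image, ← Set.image_iUnion]
  congr 1
  ext ⟨m, k⟩
  simp only [oddPascalRows, Set.mem_iUnion, Set.mem_ofPred_eq]
  exact ⟨fun ⟨_, h⟩ => h.2, fun h => ⟨m, Nat.lt_two_pow_self, h⟩⟩

theorem ulam_sierpinski :
    {p : ℕ × ℕ | 1 ≤ p.2 ∧ p.2 ≤ p.1 ∧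
        IsUlam (List.replicate p.2 true ++ List.replicate (p.1 - p.2) false)} =
      {((1 : ℕ), (1 : ℕ))} ∪ ⋃ n : ℕ, SierpinskiStage n := by
  rw [iUnion_sierpinskiStage]
  ext ⟨x, y⟩
  simp only [Set.mem_ofPred_eq, Set.mem_union, Set.mem_singleton_iff, Set.mem_image,
    Prod.exists, Prod.mk_add_mk, Prod.mk.injEq]
  constructor
  · rintro ⟨hy, hyx, hU⟩
    obtain rfl | hlt := hyx.eq_or_lt
    · have hy1 := (isUlam_replicate_iff true y).1 (by simpa using hU)
      exact Or.inl ⟨hy1, hy1⟩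
    obtain ⟨a, rfl⟩ := Nat.exists_eq_add_of_le' hy
    obtain ⟨b, rfl⟩ := Nat.exists_eq_add_of_lt hlt
    rw [show a + 1 + b + 1 - (a + 1) = b + 1 by omega,
      isUlam_replicate_append_replicate_iff_odd_choose] at hU
    exact Or.inr ⟨a + b, a, hU, by omega, rfl⟩
  · rintro (⟨rfl, rfl⟩ | ⟨m, k, hodd, rfl, rfl⟩)
    · simpa using isUlam_singleton true
    have hkm : k ≤ m := by
      by_contra! h
      simp [Nat.choose_eq_zero_of_lt h] at hodd
    obtain ⟨b, rfl⟩ := Nat.exists_eq_add_of_le hkm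
    refine ⟨by omega, by omega, ?_⟩
    rw [show k + b + 2 - (k + 1) = b + 1 by omega, isUlam_replicate_append_replicate_iff_odd_choose]
    exact hodd
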